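/- Let A ∈ 𝓘 and let V ⊆ E be disjoint from A with A ∪ V ∈ 𝓘 and |A ∪ V| ≤ r. Then the sum of the marginal losses is bounded by the optimum: ∑_{i∈V} ( f_r(A) − f_r(A ∪ {i}) ) ≤ f_r(A). -/

import Mathlib

/-
Contract `A` and truncate at rank `r - |A|`: `f_r(A)` becomes the largest weight of a base `T`
of the resulting matroid `N`, in which `V` is independent. By Hall's theorem (Brualdi's
injective exchange) there is an injection `φ : V → T`, fixing `V ∩ T`, such that
`T - φ x + x` is independent in `N` for every `x ∈ V`. Then `T - φ x` is feasible for `A + x`,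
so `f_r(A) - f_r(A + x) ≤ w(φ x)`, and summing over `V` gives at most `w(T) = f_r(A)`.
-/

open Finset

/-- `Y` is feasible for `(X, r)`: it is disjoint from `X`, `X ∪ Y` is independent in the
matroid `M`, and `|X ∪ Y| ≤ r`. -/
def MatroidFeasible {α : Type*} [DecidableEq α] (M : Matroid α) (r : ℕ)
    (X Y : Finset α) : Prop :=
  Disjoint X Y ∧ M.Indep ↑(X ∪ Y) ∧ (X ∪ Y).card ≤ r

/-- `truncOpt M w r X = f_r(X)`: the maximum weight `w(Y)` over all sets `Y` feasible for
`(X, r)`, i.e. the weight of a maximum-weight basis of the matroid contracted by `X` and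
truncated at rank `r`. -/
noncomputable def truncOpt {α : Type*} [DecidableEq α] (M : Matroid α) (w : α → ℝ)
    (r : ℕ) (X : Finset α) : ℝ :=
  sSup {t : ℝ | ∃ Y : Finset α, MatroidFeasible M r X Y ∧ t = ∑ e ∈ Y, w e}

namespace Matroid

variable {α : Type*} {M : Matroid α}

def truncateTo (M : Matroid α) (k : ℕ) : Matroid α :=
  (IndepMatroid.ofBddAugment M.E (fun I ↦ M.Indep I ∧ I.encard ≤ k)
    ⟨M.empty_indep, by simp⟩
    (fun _ _ hJ hIJ ↦ ⟨hJ.1.subset hIJ, (Set.encard_le_encard hIJ).trans hJ.2⟩)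
    (fun I J hI hJ hIJ ↦ by
      obtain ⟨e, he, hIe⟩ := hI.1.augment hJ.1 hIJ
      refine ⟨e, he.1, he.2, hIe, ?_⟩
      rw [Set.encard_insert_of_notMem he.2]
      exact (Order.add_one_le_of_lt hIJ).trans hJ.2)
    ⟨k, fun _ hI ↦ hI.2⟩
    (fun _ hI ↦ hI.1.subset_ground)).matroid

@[simp] lemma truncateTo_indep_iff {k : ℕ} {I : Set α} :
    (M.truncateTo k).Indep I ↔ M.Indep I ∧ I.encard ≤ k :=
  Iff.rfl

lemma IsBase.exists_exchange_of_insert_indep {B U : Set α} {x : α} (hB : M.IsBase B)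
    (hUB : U ⊆ B) (hxB : x ∉ B) (hxU : M.Indep (insert x U)) :
    ∃ e ∈ B \ U, M.IsBase (insert x (B \ {e})) := by
  obtain ⟨B', hB', hxUB', hB'B⟩ := hxU.exists_isBase_subset_union_isBase hB
  have hB'x : B' ⊆ insert x B := hB'B.trans <| Set.union_subset
    (Set.insert_subset_insert hUB) (Set.subset_insert x B)
  obtain ⟨e, heB, heB'⟩ : ∃ e ∈ B, e ∉ B' := by
    by_contra! hBB'
    exact hxB <| hB.eq_of_subset_isBase hB' hBB' ▸ hxUB' (Set.mem_insert x U)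
  obtain ⟨y, ⟨hyB', hyB⟩, hy⟩ := hB.exchange hB' ⟨heB, heB'⟩
  obtain rfl : y = x := (hB'x hyB').resolve_right hyB
  exact ⟨e, ⟨heB, fun heU ↦ heB' (hxUB' (Set.mem_insert_of_mem y heU))⟩, hy⟩

lemma IsBase.exists_injective_exchange [DecidableEq α] {B I : Finset α} (hB : M.IsBase B)
    (hI : M.Indep I) :
    ∃ φ : I → α, Function.Injective φ ∧
      ∀ x : I, φ x ∈ B ∧ M.Indep ↑(insert ↑x (B.erase (φ x))) ∧ (↑x ∈ B → φ x = x) := by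
  classical
  set S : I → Finset α := fun x ↦
    {e ∈ B | M.Indep ↑(insert ↑x (B.erase e)) ∧ (↑x ∈ B → e = x)}
  have hS_not_subset (x : I) (U : Finset α) (hUB : U ⊆ B) (hxU : ↑x ∉ U)
      (hind : M.Indep (insert ↑x ↑U)) : ¬ S x ⊆ U := by
    intro hSU
    by_cases hxB : ↑x ∈ B
    · refine hxU (hSU ?_)
      simpa [S, Finset.insert_erase hxB, hxB] using hB.indep
    · obtain ⟨e, ⟨heB, heU⟩, he⟩ := hB.exists_exchange_of_insert_indep hUB hxB hind
      refine heU (hSU (Finset.mem_filter.2 ⟨heB, ?_, fun h ↦ absurd h hxB⟩))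
      simpa using he.indep
  have hHall (s : Finset I) : s.card ≤ (s.biUnion S).card := by
    by_contra! hlt
    have hUB : s.biUnion S ⊆ B := Finset.biUnion_subset.2 fun _ _ ↦ Finset.filter_subset _ _
    obtain ⟨_, hxs, hxU, hind⟩ := (hB.indep.subset (Finset.coe_subset.2 hUB)).augment_finset
      (J := s.map (Function.Embedding.subtype _))
      (hI.subset fun _ hy ↦ by
        obtain ⟨x, -, rfl⟩ := Finset.mem_map.1 hy
        exact x.2)
      (by rwa [Finset.card_map])
    obtain ⟨x, hx, rfl⟩ := Finset.mem_map.1 hxs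
    exact hS_not_subset x _ hUB hxU hind (Finset.subset_biUnion_of_mem S hx)
  obtain ⟨φ, hφ, hφS⟩ := (Finset.all_card_le_biUnion_card_iff_exists_injective S).1 hHall
  exact ⟨φ, hφ, fun x ↦ by simpa [S] using hφS x⟩

lemma exists_isBase_forall_indep_sum_le {β : Type*} [Finite α] [AddCommMonoid β]
    [LinearOrder β] [IsOrderedAddMonoid β] (M : Matroid α) {w : α → β} (hw : ∀ e, 0 ≤ w e) :
    ∃ T : Finset α, M.IsBase T ∧ ∀ Y : Finset α, M.Indep Y → ∑ e ∈ Y, w e ≤ ∑ e ∈ T, w e := by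
  obtain ⟨B₀, hB₀⟩ := M.exists_isBase
  obtain ⟨B₀, rfl⟩ := B₀.toFinite.exists_finset_coe
  obtain ⟨T, hT, hTmax⟩ := Set.exists_max_image {B : Finset α | M.IsBase B}
    (fun B ↦ ∑ e ∈ B, w e) (Set.toFinite _) ⟨B₀, hB₀⟩
  refine ⟨T, hT, fun Y hY ↦ ?_⟩
  obtain ⟨B, hB, hYB⟩ := hY.exists_isBase_superset
  obtain ⟨B, rfl⟩ := B.toFinite.exists_finset_coe
  exact (sum_le_sum_of_subset_of_nonneg (coe_subset.1 hYB) fun e _ _ ↦ hw e).trans (hTmax B hB)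

end Matroid

section truncOpt

variable {α : Type*} [DecidableEq α] {M : Matroid α} {w : α → ℝ} {r : ℕ} {X Y : Finset α}

lemma MatroidFeasible.insert_left {x : α} (hxY : x ∉ Y) (h : MatroidFeasible M r X (insert x Y)) :
    MatroidFeasible M r (insert x X) Y := by
  obtain ⟨hdisj, hind, hcard⟩ := h
  rw [MatroidFeasible, insert_union, ← union_insert]
  exact ⟨disjoint_insert_left.2 ⟨hxY, hdisj.mono_right (subset_insert x Y)⟩, hind, hcard⟩

lemma indep_truncateTo_contract_iff (hX : M.Indep X) (hXr : #X ≤ r) :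
    ((M.contract X).truncateTo (r - #X)).Indep Y ↔ MatroidFeasible M r X Y := by
  rw [Matroid.truncateTo_indep_iff, hX.contract_indep_iff, Set.encard_coe_eq_coe_finsetCard,
    Nat.cast_le, MatroidFeasible, ← coe_union, union_comm, Finset.disjoint_coe, disjoint_comm,
    and_assoc]
  refine and_congr_right fun hdisj ↦ and_congr_right fun _ ↦ ?_
  rw [card_union_of_disjoint hdisj]
  omega

lemma sum_le_truncOpt [Finite α] (h : MatroidFeasible M r X Y) :
    ∑ e ∈ Y, w e ≤ truncOpt M w r X := by
  refine le_csSup (((Set.finite_range fun Y : Finset α ↦ ∑ e ∈ Y, w e).subset ?_).bddAbove)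
    ⟨Y, h, rfl⟩
  rintro _ ⟨Y, -, rfl⟩
  exact ⟨Y, rfl⟩

lemma truncOpt_eq_of_forall_sum_le {T : Finset α} (hT : MatroidFeasible M r X T)
    (hmax : ∀ Y, MatroidFeasible M r X Y → ∑ e ∈ Y, w e ≤ ∑ e ∈ T, w e) :
    truncOpt M w r X = ∑ e ∈ T, w e :=
  IsGreatest.csSup_eq ⟨⟨T, hT, rfl⟩, by rintro _ ⟨Y, hY, rfl⟩; exact hmax Y hY⟩

end truncOpt

theorem truncOpt_sum_marginal_losses_le_general
    {α : Type*} [DecidableEq α] [Fintype α] (M : Matroid α) (w : α → ℝ)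
    (hw : ∀ e, 0 ≤ w e) (r : ℕ)
    (A V : Finset α) (hdisj : Disjoint A V)
    (hAV : M.Indep ↑(A ∪ V)) (hcard : (A ∪ V).card ≤ r) :
    (∑ i ∈ V, (truncOpt M w r A - truncOpt M w r (insert i A))) ≤ truncOpt M w r A := by
  have hA : M.Indep A := hAV.subset (coe_subset.2 subset_union_left)
  have hN := fun Y ↦ indep_truncateTo_contract_iff (Y := Y) hA
    ((card_le_card subset_union_left).trans hcard)
  obtain ⟨T, hT, hTmax⟩ :=
    ((M.contract A).truncateTo (r - #A)).exists_isBase_forall_indep_sum_le hw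
  have hopt : truncOpt M w r A = ∑ e ∈ T, w e :=
    truncOpt_eq_of_forall_sum_le ((hN T).1 hT.indep) fun Y hY ↦ hTmax Y ((hN Y).2 hY)
  obtain ⟨φ, hφ, hφT⟩ := hT.exists_injective_exchange ((hN V).2 ⟨hdisj, hAV, hcard⟩)
  have hloss (x : V) : truncOpt M w r A - truncOpt M w r (insert ↑x A) ≤ w (φ x) := by
    obtain ⟨hφxT, hind, hfix⟩ := hφT x
    have hxT : ↑x ∉ T.erase (φ x) := fun hx ↦ (ne_of_mem_erase hx) (hfix (mem_of_mem_erase hx)).symm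
    have hle := sum_le_truncOpt (w := w) (((hN _).1 hind).insert_left hxT)
    rw [sum_erase_eq_sub hφxT] at hle
    linarith
  calc ∑ i ∈ V, (truncOpt M w r A - truncOpt M w r (insert i A))
      = ∑ x : V, (truncOpt M w r A - truncOpt M w r (insert ↑x A)) := (sum_coe_sort V _).symm
    _ ≤ ∑ x : V, w (φ x) := sum_le_sum fun x _ ↦ hloss x
    _ = ∑ e ∈ univ.image φ, w e := (sum_image fun x _ y _ h ↦ hφ h).symm
    _ ≤ ∑ e ∈ T, w e := sum_le_sum_of_subset_of_nonneg
        (image_subset_iff.2 fun x _ ↦ (hφT x).1) fun e _ _ ↦ hw e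
    _ = truncOpt M w r A := hopt.symm

/-- The sum of marginal losses is bounded by the optimum: for independent `A` and `V`
disjoint from `A` with `A ∪ V` independent and `|A ∪ V| ≤ r`,
`∑_{i ∈ V} (f_r(A) − f_r(A ∪ {i})) ≤ f_r(A)`. -/
theorem truncOpt_sum_marginal_losses_le
    {α : Type*} [DecidableEq α] [Fintype α] (M : Matroid α) (w : α → ℝ)
    (hw : ∀ e, 0 ≤ w e) (r : ℕ)
    (A V : Finset α) (hdisj : Disjoint A V)
    (hA : M.Indep ↑A) (hAV : M.Indep ↑(A ∪ V)) (hcard : (A ∪ V).card ≤ r) :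
    (∑ i ∈ V, (truncOpt M w r A - truncOpt M w r (insert i A))) ≤ truncOpt M w r A :=
  truncOpt_sum_marginal_losses_le_general M w hw r A V hdisj hAV hcard
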